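/- Let d ≥ 1, let N ⊂ ℝ^d be a nonempty compact set, let f : ℝ^d → [0, ∞) be continuous, let δ ∈ (0,1) and C₁ > 0, and assume f₁ := inf{ f(v) : v ∈ ℝ^d, |v| ≤ 1, dist(v, N) ≥ δ/2 } > 0. Set λ₀ := δ/(2C₁) and μ₀ := (π/2) λ₀² f₁. Let Ω ⊆ ℝ² be open and bounded, ε > 0, and let u : Ω̄ → ℝ^d be Lipschitz with Lipschitz constant at most C₁/ε, with |u(x)| ≤ 1 for all x ∈ Ω̄ and u(x) ∈ N for all x ∈ ∂Ω. Then for every x₀ ∈ Ω and every l ∈ [λ₀ ε, 1], if ε⁻² ∫_{B(x₀, 2l) ∩ Ω} f(u(x)) dx ≤ μ₀, then dist(u(x), N) ≤ δ for all x ∈ Ω̄ ∩ B(x₀, l). -/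

import Mathlib

/-!
Suppose `dist (u x, N) > δ` at some `x ∈ Ω̄ ∩ B(x₀, l)`. Since `u` is `C₁/ε`-Lipschitz,
`dist (u, N) > δ/2` on `Ω̄ ∩ B(x, r)` with `r = λ₀ ε`; in particular `u` takes no value in `N`
there, so the connected ball `B(x, r)` misses `∂Ω` and lies in `Ω`. On it `f ∘ u ≥ f₁`, and as
`r ≤ l` the ball lies in `B(x₀, 2l) ∩ Ω`, whence `∫_{B(x₀,2l) ∩ Ω} f ∘ u ≥ π r² f₁ = 2 μ₀ ε²`,
contradicting the smallness assumption.
-/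

open Metric Set MeasureTheory Real

noncomputable section

abbrev E2 : Type := EuclideanSpace ℝ (Fin 2)

theorem IsPreconnected.subset_interior_of_disjoint_frontier {X : Type*} [TopologicalSpace X]
    {s t : Set X} (hs : IsPreconnected s) (hst : Disjoint s (frontier t))
    (hne : (s ∩ closure t).Nonempty) : s ⊆ interior t := by
  have hcover : s ⊆ interior t ∪ (closure t)ᶜ := by
    intro y hy
    by_cases hyt : y ∈ closure t
    · exact .inl (by_contra fun hyi => hst.ne_of_mem hy ⟨hyt, hyi⟩ rfl)
    · exact .inr hyt
  have hdisj : Disjoint (interior t) (closure t)ᶜ :=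
    disjoint_compl_right_iff_subset.mpr (interior_subset.trans subset_closure)
  rcases hs.subset_or_subset isOpen_interior isClosed_closure.isOpen_compl hdisj hcover with h | h
  · exact h
  · obtain ⟨y, hys, hyt⟩ := hne
    exact absurd hyt (h hys)

theorem LipschitzOnWith.infDist_sub_mul_le {α β : Type*} [PseudoMetricSpace α]
    [PseudoMetricSpace β] {K : NNReal} {u : α → β} {s : Set α} (hu : LipschitzOnWith K u s)
    (N : Set β) {x y : α} {r : ℝ} (hx : x ∈ s) (hy : y ∈ s) (hxy : dist x y ≤ r) :
    infDist (u x) N - K * r ≤ infDist (u y) N := by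
  have h := ((lipschitz_infDist_pt N).comp_lipschitzOnWith hu).dist_le_mul x hx y hy
  rw [one_mul, Real.dist_eq, Function.comp_apply, Function.comp_apply] at h
  have hKr : (K : ℝ) * dist x y ≤ K * r := by gcongr
  linarith [le_abs_self (infDist (u x) N - infDist (u y) N)]

theorem ball_subset_of_disjoint_frontier {E : Type*} [SeminormedAddCommGroup E]
    [NormedSpace ℝ E] {Ω : Set E} (hΩ : IsOpen Ω) {x : E} {r : ℝ} (hr : 0 < r)
    (hx : x ∈ closure Ω) (h : Disjoint (ball x r) (frontier Ω)) : ball x r ⊆ Ω := by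
  rw [← hΩ.interior_eq]
  exact (convex_ball x r).isPreconnected.subset_interior_of_disjoint_frontier h
    ⟨x, mem_ball_self hr, hx⟩

theorem ContinuousOn.integrableOn_ball_inter {X E : Type*} [MetricSpace X] [ProperSpace X]
    [MeasurableSpace X] [OpensMeasurableSpace X] {μ : Measure X} [IsFiniteMeasureOnCompacts μ]
    [NormedAddCommGroup E] {g : X → E} {s : Set X} (hg : ContinuousOn g (closure s))
    (x : X) (R : ℝ) : IntegrableOn g (ball x R ∩ s) μ :=
  ((hg.mono inter_subset_right).integrableOn_compact
    ((isCompact_closedBall x R).inter_right isClosed_closure)).mono_set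
    (inter_subset_inter ball_subset_closedBall subset_closure)

theorem mul_pi_mul_sq_le_setIntegral {g : E2 → ℝ} {S : Set E2} {x : E2} {r c : ℝ} (hr : 0 ≤ r)
    (hg : IntegrableOn g S) (hg0 : 0 ≤ᵐ[volume.restrict S] g) (hS : ball x r ⊆ S)
    (hc : ∀ y ∈ ball x r, c ≤ g y) :
    c * (π * r ^ 2) ≤ ∫ y in S, g y := by
  have hvol : volume.real (ball x r) = π * r ^ 2 := by
    rw [measureReal_def, EuclideanSpace.volume_ball_fin_two, ENNReal.toReal_mul,
      ENNReal.toReal_pow, ENNReal.toReal_ofReal hr, ENNReal.toReal_ofReal pi_pos.le, mul_comm]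
  calc c * (π * r ^ 2) ≤ ∫ y in ball x r, g y := hvol ▸
        setIntegral_ge_of_const_le_real measurableSet_ball measure_ball_lt_top.ne hc
          (hg.mono_set hS)
    _ ≤ ∫ y in S, g y := setIntegral_mono_set hg hg0 (.of_forall hS)

theorem stmt17 (d : ℕ)
    (N : Set (EuclideanSpace ℝ (Fin d)))
    (f : EuclideanSpace ℝ (Fin d) → ℝ) (hf_cont : Continuous f) (hf_nonneg : ∀ v, 0 ≤ f v)
    (δ : ℝ) (hδ0 : 0 < δ) (C₁ : ℝ) (hC₁ : 0 < C₁)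
    (f₁ : ℝ)
    (hf₁_def : f₁ = sInf (f '' {v : EuclideanSpace ℝ (Fin d) |
      ‖v‖ ≤ 1 ∧ δ/2 ≤ Metric.infDist v N}))
    (hf₁_pos : 0 < f₁)
    (Ω : Set E2) (hΩ_open : IsOpen Ω)
    (ε : ℝ) (hε : 0 < ε)
    (u : E2 → EuclideanSpace ℝ (Fin d))
    (hu_lip : LipschitzOnWith (Real.toNNReal (C₁ / ε)) u (closure Ω))
    (hu_bd : ∀ x ∈ closure Ω, ‖u x‖ ≤ 1)
    (hu_N : ∀ x ∈ frontier Ω, u x ∈ N)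
    (x₀ : E2)
    (l : ℝ) (hl1 : (δ / (2 * C₁)) * ε ≤ l)
    (hsmall : (1/ε^2) * (∫ x in Metric.ball x₀ (2*l) ∩ Ω, f (u x)) ≤
      (π/2) * (δ / (2 * C₁)) ^ 2 * f₁) :
    ∀ x ∈ closure Ω ∩ Metric.ball x₀ l, Metric.infDist (u x) N ≤ δ := by
  rintro x ⟨hxΩ, hxl⟩
  by_contra! hfar_x
  set r := δ / (2 * C₁) * ε with hr
  have hr_pos : 0 < r := by positivity
  have hKr : ((C₁ / ε).toNNReal : ℝ) * r = δ / 2 := by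
    rw [Real.coe_toNNReal _ (by positivity), hr]
    field_simp
  have hfar : ∀ y ∈ closure Ω ∩ ball x r, δ / 2 < infDist (u y) N := fun y ⟨hyΩ, hyr⟩ => by
    linarith [hu_lip.infDist_sub_mul_le N hxΩ hyΩ (mem_ball'.mp hyr).le]
  have hball_Ω : ball x r ⊆ Ω := by
    refine ball_subset_of_disjoint_frontier hΩ_open hr_pos hxΩ
      (disjoint_left.mpr fun y hyr hyΩ => (hfar y ⟨frontier_subset_closure hyΩ, hyr⟩).not_ge ?_)
    rw [infDist_zero_of_mem (hu_N y hyΩ)]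
    positivity
  have hf₁_le : ∀ y ∈ ball x r, f₁ ≤ f (u y) := fun y hyr => by
    have hyΩ := subset_closure (hball_Ω hyr)
    rw [hf₁_def]
    exact csInf_le ⟨0, by rintro _ ⟨v, -, rfl⟩; exact hf_nonneg v⟩
      ⟨u y, ⟨hu_bd y hyΩ, (hfar y ⟨hyΩ, hyr⟩).le⟩, rfl⟩
  have hball_sub : ball x r ⊆ ball x₀ (2 * l) ∩ Ω :=
    subset_inter (ball_subset_ball' (by linarith [mem_ball.mp hxl])) hball_Ω
  have hint : IntegrableOn (fun y => f (u y)) (ball x₀ (2 * l) ∩ Ω) :=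
    (hf_cont.comp_continuousOn hu_lip.continuousOn).integrableOn_ball_inter x₀ (2 * l)
  have henergy : f₁ * (π * r ^ 2) ≤ f₁ * (π * r ^ 2) / 2 := calc
    f₁ * (π * r ^ 2) ≤ ∫ y in ball x₀ (2 * l) ∩ Ω, f (u y) :=
      mul_pi_mul_sq_le_setIntegral hr_pos.le hint (.of_forall fun y => hf_nonneg _) hball_sub
        hf₁_le
    _ ≤ (π / 2) * (δ / (2 * C₁)) ^ 2 * f₁ * ε ^ 2 := by
      rw [one_div, inv_mul_le_iff₀ (by positivity)] at hsmall
      linarith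
    _ = f₁ * (π * r ^ 2) / 2 := by rw [hr]; ring
  have : 0 < f₁ * (π * r ^ 2) := by positivity
  linarith
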